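/- Let Q ⊂ ℝ³ be the convex hull of the eight points (±√3/3, ±√3/3, ±√3/3), and for a unit vector u ∈ S² let w(u) = sup_{x∈Q} ⟨u,x⟩ − inf_{x∈Q} ⟨u,x⟩ denote the width of Q in direction u. Let σ be the surface measure on the unit sphere S² ⊂ ℝ³ (with total mass σ(S²) = 4π). Then (3/4)·(1/(4π))·∫_{S²} w(u)² dσ(u) = 1 + 4/π. In other words, the mean square width of a cube with unit edge length is 1 + 4/π. -/

import Mathlib

/-!
The cube with vertices `(±s, ±s, ±s)` has support function `u ↦ s ‖u‖₁`, so its width is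
`w(u) = 2s ‖u‖₁` and, for `s = √3/3`, `w(u)² = (4/3) ‖u‖₁²`. To integrate `‖u‖₁²` over the sphere,
integrate the `2`-homogeneous function `‖x‖₁²` against the Gaussian `exp (-‖x‖²)` over `ℝ³` twice:
in polar coordinates this gives `(∫_{S²} ‖u‖₁² dσ) · Γ(5/2)/2`, while expanding the square and
using Fubini it is a sum of products of one-dimensional moments `∫ |t|ᵏ exp (-t²) dt = Γ((k+1)/2)`,
namely `3 · Γ(3/2) Γ(1/2)² + 6 · Γ(1)² Γ(1/2)`. Hence `∫_{S²} ‖u‖₁² dσ = 4π + 16`.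
-/

open Real MeasureTheory

/-- The point `(a, b, c)` of Euclidean 3-space. -/
noncomputable def pt (a b c : ℝ) : EuclideanSpace ℝ (Fin 3) :=
  (WithLp.equiv 2 (Fin 3 → ℝ)).symm ![a, b, c]

/-- The width of a set `C ⊆ ℝ³` in direction `u`:
`w(u) = sup_{x ∈ C} ⟪u, x⟫ − inf_{x ∈ C} ⟪u, x⟫`. -/
noncomputable def width (C : Set (EuclideanSpace ℝ (Fin 3))) (u : EuclideanSpace ℝ (Fin 3)) : ℝ :=
  sSup ((fun x => (inner ℝ u x : ℝ)) '' C) - sInf ((fun x => (inner ℝ u x : ℝ)) '' C)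

/-- The cube with vertices `(±√3/3, ±√3/3, ±√3/3)`, of edge length `2/√3`. -/
noncomputable def Q : Set (EuclideanSpace ℝ (Fin 3)) :=
  convexHull ℝ
    {pt (Real.sqrt 3 / 3) (Real.sqrt 3 / 3) (Real.sqrt 3 / 3),
      pt (Real.sqrt 3 / 3) (Real.sqrt 3 / 3) (-(Real.sqrt 3 / 3)),
      pt (Real.sqrt 3 / 3) (-(Real.sqrt 3 / 3)) (Real.sqrt 3 / 3),
      pt (Real.sqrt 3 / 3) (-(Real.sqrt 3 / 3)) (-(Real.sqrt 3 / 3)),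
      pt (-(Real.sqrt 3 / 3)) (Real.sqrt 3 / 3) (Real.sqrt 3 / 3),
      pt (-(Real.sqrt 3 / 3)) (Real.sqrt 3 / 3) (-(Real.sqrt 3 / 3)),
      pt (-(Real.sqrt 3 / 3)) (-(Real.sqrt 3 / 3)) (Real.sqrt 3 / 3),
      pt (-(Real.sqrt 3 / 3)) (-(Real.sqrt 3 / 3)) (-(Real.sqrt 3 / 3))}

/-- The surface measure `σ` on the unit sphere `S² ⊂ ℝ³`, with total mass
`σ(S²) = 3 · vol(unit ball) = 4π`. -/
noncomputable def sphereSurfaceMeasure :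
    Measure (Metric.sphere (0 : EuclideanSpace ℝ (Fin 3)) 1) :=
  (volume : Measure (EuclideanSpace ℝ (Fin 3))).toSphere

open Set Metric

theorem IsGreatest.image_convexHull {E : Type*} [AddCommGroup E] [Module ℝ E] (f : E →ₗ[ℝ] ℝ)
    {s : Set E} {M : ℝ} (h : IsGreatest (f '' s) M) : IsGreatest (f '' convexHull ℝ s) M := by
  refine ⟨image_mono (subset_convexHull ℝ s) h.1, ?_⟩
  rw [f.image_convexHull]
  exact convexHull_min (fun _ hy => h.2 hy) (convex_Iic M)

theorem IsLeast.image_convexHull {E : Type*} [AddCommGroup E] [Module ℝ E] (f : E →ₗ[ℝ] ℝ)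
    {s : Set E} {m : ℝ} (h : IsLeast (f '' s) m) : IsLeast (f '' convexHull ℝ s) m := by
  refine ⟨image_mono (subset_convexHull ℝ s) h.1, ?_⟩
  rw [f.image_convexHull]
  exact convexHull_min (fun _ hy => h.2 hy) (convex_Ici m)

theorem width_eq_of_isGreatest_of_isLeast {C : Set (EuclideanSpace ℝ (Fin 3))}
    {u : EuclideanSpace ℝ (Fin 3)} {M m : ℝ}
    (hM : IsGreatest ((fun x => (inner ℝ u x : ℝ)) '' C) M)
    (hm : IsLeast ((fun x => (inner ℝ u x : ℝ)) '' C) m) : width C u = M - m := by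
  rw [width, hM.csSup_eq, hm.csInf_eq]

theorem inner_pt (u : EuclideanSpace ℝ (Fin 3)) (a b c : ℝ) :
    (inner ℝ u (pt a b c) : ℝ) = u 0 * a + u 1 * b + u 2 * c := by
  simp [pt, PiLp.inner_apply, Fin.sum_univ_three, mul_comm]

def cubeVertices (s : ℝ) : Set (EuclideanSpace ℝ (Fin 3)) :=
  {pt s s s, pt s s (-s), pt s (-s) s, pt s (-s) (-s),
    pt (-s) s s, pt (-s) s (-s), pt (-s) (-s) s, pt (-s) (-s) (-s)}

theorem Q_eq_convexHull_cubeVertices : Q = convexHull ℝ (cubeVertices (√3 / 3)) := rfl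

theorem pt_mem_cubeVertices {s a b c : ℝ} (ha : a = s ∨ a = -s) (hb : b = s ∨ b = -s)
    (hc : c = s ∨ c = -s) : pt a b c ∈ cubeVertices s := by
  rcases ha with rfl | rfl <;> rcases hb with rfl | rfl <;> rcases hc with rfl | rfl <;>
    simp [cubeVertices]

theorem abs_inner_le_of_mem_cubeVertices {s : ℝ} (hs : 0 ≤ s) (u : EuclideanSpace ℝ (Fin 3))
    {v : EuclideanSpace ℝ (Fin 3)} (hv : v ∈ cubeVertices s) :
    |(inner ℝ u v : ℝ)| ≤ s * ∑ i, |u i| := by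
  have habs_inner_pt : ∀ a b c : ℝ, |a| = s → |b| = s → |c| = s →
      |(inner ℝ u (pt a b c) : ℝ)| ≤ s * ∑ i, |u i| := by
    intro a b c ha hb hc
    rw [inner_pt, Fin.sum_univ_three]
    calc |u 0 * a + u 1 * b + u 2 * c| ≤ |u 0 * a| + |u 1 * b| + |u 2 * c| := abs_add_three _ _ _
      _ = s * (|u 0| + |u 1| + |u 2|) := by simp only [abs_mul, ha, hb, hc]; ring
  have habs : |s| = s := abs_of_nonneg hs
  have habs_neg : |-s| = s := by rw [abs_neg, habs]
  simp only [cubeVertices, mem_insert_iff, mem_singleton_iff] at hv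
  rcases hv with rfl | rfl | rfl | rfl | rfl | rfl | rfl | rfl <;>
    exact habs_inner_pt _ _ _ ‹_› ‹_› ‹_›

theorem exists_eq_or_eq_neg_mul_eq_mul_abs (s x : ℝ) :
    ∃ a, (a = s ∨ a = -s) ∧ x * a = s * |x| := by
  rcases le_or_gt 0 x with hx | hx
  · exact ⟨s, .inl rfl, by rw [abs_of_nonneg hx]; ring⟩
  · exact ⟨-s, .inr rfl, by rw [abs_of_neg hx]; ring⟩

theorem isGreatest_inner_cubeVertices {s : ℝ} (hs : 0 ≤ s) (u : EuclideanSpace ℝ (Fin 3)) :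
    IsGreatest ((fun x => (inner ℝ u x : ℝ)) '' cubeVertices s) (s * ∑ i, |u i|) := by
  obtain ⟨a, ha, hua⟩ := exists_eq_or_eq_neg_mul_eq_mul_abs s (u 0)
  obtain ⟨b, hb, hub⟩ := exists_eq_or_eq_neg_mul_eq_mul_abs s (u 1)
  obtain ⟨c, hc, huc⟩ := exists_eq_or_eq_neg_mul_eq_mul_abs s (u 2)
  refine ⟨⟨pt a b c, pt_mem_cubeVertices ha hb hc, ?_⟩, ?_⟩
  · dsimp only
    rw [inner_pt, Fin.sum_univ_three, hua, hub, huc]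
    ring
  · rintro _ ⟨v, hv, rfl⟩
    exact (le_abs_self _).trans (abs_inner_le_of_mem_cubeVertices hs u hv)

theorem isLeast_inner_cubeVertices {s : ℝ} (hs : 0 ≤ s) (u : EuclideanSpace ℝ (Fin 3)) :
    IsLeast ((fun x => (inner ℝ u x : ℝ)) '' cubeVertices s) (-(s * ∑ i, |u i|)) := by
  obtain ⟨a, ha, hua⟩ := exists_eq_or_eq_neg_mul_eq_mul_abs s (-u 0)
  obtain ⟨b, hb, hub⟩ := exists_eq_or_eq_neg_mul_eq_mul_abs s (-u 1)
  obtain ⟨c, hc, huc⟩ := exists_eq_or_eq_neg_mul_eq_mul_abs s (-u 2)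
  rw [abs_neg] at hua hub huc
  refine ⟨⟨pt a b c, pt_mem_cubeVertices ha hb hc, ?_⟩, ?_⟩
  · dsimp only
    rw [inner_pt, Fin.sum_univ_three]
    linear_combination -hua - hub - huc
  · rintro _ ⟨v, hv, rfl⟩
    exact neg_le.1 ((neg_le_abs _).trans (abs_inner_le_of_mem_cubeVertices hs u hv))

theorem width_convexHull_cubeVertices {s : ℝ} (hs : 0 ≤ s) (u : EuclideanSpace ℝ (Fin 3)) :
    width (convexHull ℝ (cubeVertices s)) u = 2 * s * ∑ i, |u i| := by
  rw [width_eq_of_isGreatest_of_isLeast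
    ((isGreatest_inner_cubeVertices hs u).image_convexHull (innerSL ℝ u).toLinearMap)
    ((isLeast_inner_cubeVertices hs u).image_convexHull (innerSL ℝ u).toLinearMap)]
  ring

theorem sq_width_Q (u : EuclideanSpace ℝ (Fin 3)) :
    width Q u ^ 2 = 4 / 3 * (∑ i, |u i|) ^ 2 := by
  rw [Q_eq_convexHull_cubeVertices, width_convexHull_cubeVertices (by positivity), mul_pow, mul_pow, div_pow, sq_sqrt (by norm_num : (0 : ℝ) ≤ 3)]
  norm_num

theorem integral_Ioi_pow_mul_exp_neg_sq (n : ℕ) :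
    ∫ r in Ioi (0 : ℝ), r ^ n * exp (-r ^ 2) = Gamma ((n + 1) / 2) / 2 := by
  have h := integral_rpow_mul_exp_neg_rpow (p := 2) (q := n) two_pos
    (neg_one_lt_zero.trans_le n.cast_nonneg)
  simp only [rpow_natCast, rpow_two] at h
  rw [h]
  ring

section PolarCoordinates

variable {E : Type*} [NormedAddCommGroup E] [NormedSpace ℝ E] [MeasurableSpace E] [BorelSpace E]
  [FiniteDimensional ℝ E] [Nontrivial E] (μ : Measure E) [μ.IsAddHaarMeasure]

theorem integral_comp_normalize_mul_comp_norm (g : E → ℝ) (h : ℝ → ℝ) :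
    ∫ x, g (‖x‖⁻¹ • x) * h ‖x‖ ∂μ =
      (∫ u : sphere (0 : E) 1, g u ∂μ.toSphere) *
        ∫ r in Ioi (0 : ℝ), r ^ (Module.finrank ℝ E - 1) * h r := by
  calc ∫ x, g (‖x‖⁻¹ • x) * h ‖x‖ ∂μ
      = ∫ x : ({0}ᶜ : Set E), g (‖x.1‖⁻¹ • x.1) * h ‖x.1‖ ∂(μ.comap (↑)) := by
        rw [integral_subtype_comap (measurableSet_singleton _).compl
          (fun x => g (‖x‖⁻¹ • x) * h ‖x‖), restrict_compl_singleton]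
    _ = ∫ p, g p.1 * h p.2 ∂(μ.toSphere.prod (.volumeIoiPow (Module.finrank ℝ E - 1))) := by
        simpa using μ.measurePreserving_homeomorphUnitSphereProd.integral_comp
          (Homeomorph.measurableEmbedding _) (fun p => g p.1 * h p.2)
    _ = _ := by
        rw [integral_prod_mul (fun u : sphere (0 : E) 1 => g u) (fun r : Ioi (0 : ℝ) => h r)]
        congr 1
        simp only [Measure.volumeIoiPow, ENNReal.ofReal]
        rw [integral_withDensity_eq_integral_smul
            ((measurable_subtype_coe.pow_const _).real_toNNReal),
          integral_subtype_comap measurableSet_Ioi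
            (fun a : ℝ => (a ^ (Module.finrank ℝ E - 1)).toNNReal • h a)]
        refine setIntegral_congr_fun measurableSet_Ioi fun r hr => ?_
        rw [NNReal.smul_def, Real.coe_toNNReal _ (pow_nonneg (le_of_lt hr) _), smul_eq_mul]

theorem integral_mul_exp_neg_norm_sq_of_homogeneous {f : E → ℝ} {p : ℕ}
    (hf : ∀ (r : ℝ) (x : E), 0 < r → f (r • x) = r ^ p * f x) :
    ∫ x, f x * exp (-‖x‖ ^ 2) ∂μ =
      (∫ u : sphere (0 : E) 1, f u ∂μ.toSphere) * (Gamma ((Module.finrank ℝ E + p) / 2) / 2) := by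
  have hpolar : ∀ x : E, x ≠ 0 →
      f x * exp (-‖x‖ ^ 2) = f (‖x‖⁻¹ • x) * (‖x‖ ^ p * exp (-‖x‖ ^ 2)) := by
    intro x hx
    have hn : 0 < ‖x‖ := norm_pos_iff.2 hx
    have hfx : f x = ‖x‖ ^ p * f (‖x‖⁻¹ • x) := by rw [← hf _ _ hn, smul_inv_smul₀ hn.ne']
    rw [hfx]
    ring
  have hdim : 1 ≤ Module.finrank ℝ E := Module.finrank_pos
  rw [integral_congr_ae (Filter.mem_of_superset (compl_mem_ae_iff.2 (measure_singleton 0)) hpolar),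
    integral_comp_normalize_mul_comp_norm μ f (fun r => r ^ p * exp (-r ^ 2))]
  congr 1
  simp_rw [← mul_assoc, ← pow_add]
  rw [integral_Ioi_pow_mul_exp_neg_sq]
  push_cast [hdim]
  ring_nf

end PolarCoordinates

theorem integral_abs_pow_mul_exp_neg_sq (n : ℕ) :
    ∫ x : ℝ, |x| ^ n * exp (-x ^ 2) = Gamma ((n + 1) / 2) := by
  calc ∫ x : ℝ, |x| ^ n * exp (-x ^ 2) = ∫ x : ℝ, |x| ^ n * exp (-|x| ^ 2) := by simp_rw [sq_abs]
    _ = Gamma ((n + 1) / 2) := by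
      rw [integral_comp_abs (f := fun r => r ^ n * exp (-r ^ 2)), integral_Ioi_pow_mul_exp_neg_sq]
      ring

theorem integrable_abs_pow_mul_exp_neg_sq (n : ℕ) :
    Integrable fun x : ℝ => |x| ^ n * exp (-x ^ 2) := by
  have h := (integrable_rpow_mul_exp_neg_mul_sq (b := 1) one_pos (s := n)
    (neg_one_lt_zero.trans_le n.cast_nonneg)).norm
  refine h.congr (.of_forall fun x => ?_)
  simp [abs_of_pos (exp_pos _)]

section EuclideanSpace

variable {ι : Type*} [Fintype ι]

theorem EuclideanSpace.exp_neg_norm_sq_eq_prod (x : EuclideanSpace ℝ ι) :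
    exp (-‖x‖ ^ 2) = ∏ i, exp (-x i ^ 2) := by
  rw [EuclideanSpace.norm_sq_eq, ← Finset.sum_neg_distrib, exp_sum]
  simp

theorem integral_prod_abs_pow_mul_exp_neg_norm_sq (a : ι → ℕ) :
    ∫ x : EuclideanSpace ℝ ι, (∏ i, |x i| ^ a i) * exp (-‖x‖ ^ 2) =
      ∏ i, Gamma ((a i + 1) / 2) := by
  simp_rw [EuclideanSpace.exp_neg_norm_sq_eq_prod, ← Finset.prod_mul_distrib]
  refine ((EuclideanSpace.volume_preserving_symm_measurableEquiv_toLp ι).integral_comp'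
    (g := fun y : ι → ℝ => ∏ i, |y i| ^ a i * exp (-y i ^ 2))).trans ?_
  rw [integral_fintype_prod_volume_eq_prod (fun i (t : ℝ) => |t| ^ a i * exp (-t ^ 2))]
  simp_rw [integral_abs_pow_mul_exp_neg_sq]

theorem integrable_prod_abs_pow_mul_exp_neg_norm_sq (a : ι → ℕ) :
    Integrable fun x : EuclideanSpace ℝ ι => (∏ i, |x i| ^ a i) * exp (-‖x‖ ^ 2) := by
  simp_rw [EuclideanSpace.exp_neg_norm_sq_eq_prod, ← Finset.prod_mul_distrib]
  refine ((EuclideanSpace.volume_preserving_symm_measurableEquiv_toLp ι).integrable_comp_emb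
    (MeasurableEquiv.measurableEmbedding _)
    (g := fun y : ι → ℝ => ∏ i, |y i| ^ a i * exp (-y i ^ 2))).2 ?_
  exact Integrable.fintype_prod (f := fun i (t : ℝ) => |t| ^ a i * exp (-t ^ 2))
    fun i => integrable_abs_pow_mul_exp_neg_sq (a i)

variable [DecidableEq ι]

theorem prod_pow_piSingle_add_piSingle (c : ι → ℝ) (i j : ι) :
    ∏ k, c k ^ (Pi.single i 1 + Pi.single j 1 : ι → ℕ) k = c i * c j := by
  simp only [Pi.add_apply, pow_add, Finset.prod_mul_distrib, Pi.single_apply, pow_ite, pow_one,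
    pow_zero, Finset.prod_ite_eq', Finset.mem_univ, if_true]

theorem sq_sum_abs_eq_sum_sum_prod_pow (x : ι → ℝ) :
    (∑ i, |x i|) ^ 2 = ∑ i, ∑ j, ∏ k, |x k| ^ (Pi.single i 1 + Pi.single j 1 : ι → ℕ) k := by
  simp_rw [prod_pow_piSingle_add_piSingle, sq, Finset.sum_mul_sum]

theorem integral_sq_sum_abs_mul_exp_neg_norm_sq :
    ∫ x : EuclideanSpace ℝ ι, (∑ i, |x i|) ^ 2 * exp (-‖x‖ ^ 2) =
      ∑ i, ∑ j, ∏ k, Gamma (((Pi.single i 1 + Pi.single j 1 : ι → ℕ) k + 1) / 2) := by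
  simp_rw [sq_sum_abs_eq_sum_sum_prod_pow, Finset.sum_mul]
  rw [integral_finsetSum _ fun i _ => integrable_finsetSum _ fun j _ =>
    integrable_prod_abs_pow_mul_exp_neg_norm_sq _]
  refine Finset.sum_congr rfl fun i _ => ?_
  rw [integral_finsetSum _ fun j _ => integrable_prod_abs_pow_mul_exp_neg_norm_sq _]
  simp_rw [integral_prod_abs_pow_mul_exp_neg_norm_sq]

end EuclideanSpace

theorem Real.Gamma_three_halves : Gamma (3 / 2) = √π / 2 := by
  rw [show (3 / 2 : ℝ) = 1 / 2 + 1 by norm_num, Gamma_add_one (by norm_num), Gamma_one_half_eq]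
  ring

theorem Real.Gamma_five_halves : Gamma (5 / 2) = 3 * √π / 4 := by
  rw [show (5 / 2 : ℝ) = 3 / 2 + 1 by norm_num, Gamma_add_one (by norm_num), Gamma_three_halves]
  ring

theorem integral_sq_sum_abs_mul_exp_neg_norm_sq_fin_three :
    ∫ x : EuclideanSpace ℝ (Fin 3), (∑ i, |x i|) ^ 2 * exp (-‖x‖ ^ 2) =
      3 / 2 * π * √π + 6 * √π := by
  rw [integral_sq_sum_abs_mul_exp_neg_norm_sq]
  simp only [Fin.sum_univ_three, Fin.prod_univ_three, Pi.add_apply, Pi.single_apply, Fin.reduceEq,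
    ↓reduceIte, Nat.cast_add, Nat.cast_ite, Nat.cast_one, Nat.cast_zero, add_zero, zero_add]
  norm_num [Gamma_one_half_eq, Gamma_three_halves]
  linear_combination (3 / 2 * √π) * Real.mul_self_sqrt pi_pos.le

theorem integral_toSphere_sq_sum_abs_fin_three :
    ∫ u : sphere (0 : EuclideanSpace ℝ (Fin 3)) 1, (∑ i, |(u : EuclideanSpace ℝ (Fin 3)) i|) ^ 2
      ∂(volume : Measure (EuclideanSpace ℝ (Fin 3))).toSphere = 4 * π + 16 := by
  have hpolar := integral_mul_exp_neg_norm_sq_of_homogeneous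
    (volume : Measure (EuclideanSpace ℝ (Fin 3))) (f := fun x => (∑ i, |x i|) ^ 2) (p := 2)
    fun r x hr => by
      simp only [PiLp.smul_apply, smul_eq_mul, abs_mul, abs_of_pos hr, ← Finset.mul_sum]
      ring
  rw [integral_sq_sum_abs_mul_exp_neg_norm_sq_fin_three, finrank_euclideanSpace_fin] at hpolar
  norm_num [Gamma_five_halves] at hpolar
  refine mul_right_cancel₀ (sqrt_pos.2 pi_pos).ne' ?_
  linear_combination (-8 / 3) * hpolar

/-- The mean square width of a cube with unit edge length is `1 + 4/π`. -/
theorem mean_square_width_cube :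
    (3/4) * (1 / (4 * π)) *
      ∫ u : Metric.sphere (0 : EuclideanSpace ℝ (Fin 3)) 1,
        (width Q ↑u) ^ 2 ∂sphereSurfaceMeasure
      = 1 + 4 / π := by
  have hmean : ∫ u : sphere (0 : EuclideanSpace ℝ (Fin 3)) 1, width Q u ^ 2 ∂sphereSurfaceMeasure
      = 4 / 3 * (4 * π + 16) := by
    simp_rw [sq_width_Q]
    rw [integral_const_mul, sphereSurfaceMeasure, integral_toSphere_sq_sum_abs_fin_three]
  rw [hmean]
  field_simp
  ring
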